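/- arXiv:2109.08554 — 4 statements merged into one kernel-verified Lean document; each statement's English description precedes it below -/
import Mathlib

section
/- The derivative of the Riemann zeta function at −2 satisfies ζ′(−2) = −ζ(3)/(4π²); equivalently, −28 ζ′(−2) = 7ζ(3)/π². -/
/-!
Differentiate the functional equation `ζ(1 - s) = 2 (2π)^(-s) Γ(s) cos(πs/2) ζ(s)` at an odd
integer `s = 2n + 1 > 1`. The cosine vanishes there, so only the term carrying its derivative
survives, which gives `ζ'(-2n) = (-1)^n (2n)! ζ(2n + 1) / (2 (2π)^(2n))`; take `n = 1`.
-/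

open Complex Filter Topology
open scoped Real Nat

theorem DifferentiableAt.mul_of_eq_zero_right {𝕜 𝔸 : Type*} [NontriviallyNormedField 𝕜]
    [NormedRing 𝔸] [NormedAlgebra 𝕜 𝔸] {c d : 𝕜 → 𝔸} {d' : 𝔸} {x : 𝕜} (hc : DifferentiableAt 𝕜 c x)
    (hd : HasDerivAt d d' x) (hdx : d x = 0) : HasDerivAt (fun y => c y * d y) (c x * d') x := by
  simpa [hdx] using hc.hasDerivAt.fun_mul hd

namespace Complex

theorem cos_pi_mul_two_mul_nat_add_one_div_two (n : ℕ) : cos (π * (2 * n + 1) / 2) = 0 := by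
  rw [show (π : ℂ) * (2 * n + 1) / 2 = n * π + π / 2 by ring, cos_add_pi_div_two, sin_nat_mul_pi,
    neg_zero]

theorem sin_pi_mul_two_mul_nat_add_one_div_two (n : ℕ) :
    sin (π * (2 * n + 1) / 2) = (-1) ^ n := by
  rw [show (π : ℂ) * (2 * n + 1) / 2 = n * π + π / 2 by ring, sin_add_pi_div_two]
  exact_mod_cast congrArg ofReal (Real.cos_nat_mul_pi n)

end Complex

theorem riemannZeta_one_sub_eventuallyEq {s₀ : ℂ} (hs₀ : 1 < s₀.re) :
    (fun s => riemannZeta (1 - s)) =ᶠ[𝓝 s₀]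
      fun s => 2 * (2 * π) ^ (-s) * Gamma s * riemannZeta s * cos (π * s / 2) := by
  filter_upwards [(isOpen_lt continuous_const continuous_re).mem_nhds hs₀] with s hs
  have hs_ne_neg (n : ℕ) : s ≠ -n := by
    rintro rfl
    simp at hs
    linarith [n.cast_nonneg (α := ℝ)]
  have hs_ne_one : s ≠ 1 := by
    rintro rfl
    simp at hs
  rw [riemannZeta_one_sub hs_ne_neg hs_ne_one, mul_right_comm]

theorem differentiableAt_riemannZeta_functional_factor {s : ℂ} (hs : 1 < s.re) :
    DifferentiableAt ℂ (fun s => 2 * (2 * π) ^ (-s) * Gamma s * riemannZeta s) s := by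
  have hpow : DifferentiableAt ℂ (fun s : ℂ => (2 * (π : ℂ)) ^ (-s)) s :=
    differentiableAt_id.neg.const_cpow (.inl (by simp [Real.pi_ne_zero]))
  have hΓ : DifferentiableAt ℂ Gamma s := differentiableAt_Gamma _ fun m hm => by
    simp [hm] at hs; linarith [m.cast_nonneg (α := ℝ)]
  have hζ : DifferentiableAt ℂ riemannZeta s := differentiableAt_riemannZeta fun h => by
    simp [h] at hs
  fun_prop

theorem deriv_riemannZeta_neg_two_mul_nat {n : ℕ} (hn : n ≠ 0) :
    deriv riemannZeta (-2 * n) =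
      (-1) ^ n * (2 * n)! * riemannZeta (2 * n + 1) / (2 * (2 * π) ^ (2 * n)) := by
  set s₀ : ℂ := 2 * n + 1 with hs₀_def
  have hs₀ : 1 < s₀.re := by simpa [hs₀_def] using Nat.pos_of_ne_zero hn
  have hcos : HasDerivAt (fun s : ℂ => cos (π * s / 2)) (-sin (π * s₀ / 2) * (π / 2)) s₀ := by
    have hlin : HasDerivAt (fun s : ℂ => π * s / 2) (π / 2) s₀ := by
      simpa using ((hasDerivAt_id s₀).const_mul (π : ℂ)).div_const 2
    exact (hasDerivAt_cos _).comp s₀ hlin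
  have hrhs := (differentiableAt_riemannZeta_functional_factor hs₀).mul_of_eq_zero_right
    hcos (cos_pi_mul_two_mul_nat_add_one_div_two n)
  have hlhs : deriv (fun s => riemannZeta (1 - s)) s₀ = -deriv riemannZeta (-2 * n) := by
    rw [deriv_comp_const_sub, hs₀_def]; ring_nf
  have key := hlhs ▸ (riemannZeta_one_sub_eventuallyEq hs₀).deriv_eq.trans hrhs.deriv
  have hΓ : Gamma s₀ = (2 * n)! := by
    rw [hs₀_def, ← Gamma_nat_eq_factorial]; push_cast; ring_nf
  have hpow : (2 * (π : ℂ)) ^ (-s₀) = ((2 * (π : ℂ)) ^ (2 * n + 1))⁻¹ := by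
    rw [cpow_neg, hs₀_def, ← cpow_natCast]; push_cast; rfl
  rw [sin_pi_mul_two_mul_nat_add_one_div_two, hΓ, hpow] at key
  rw [← neg_neg (deriv riemannZeta _), key, pow_succ]
  field_simp

/-- `ζ′(−2) = −ζ(3)/(4π²)`; equivalently `−28 ζ′(−2) = 7ζ(3)/π²`. -/
theorem zeta_deriv_neg_two :
    deriv riemannZeta (-2) = -riemannZeta 3 / (4 * (Real.pi : ℂ) ^ 2) ∧
    -28 * deriv riemannZeta (-2) = 7 * riemannZeta 3 / (Real.pi : ℂ) ^ 2 := by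
  have hval : deriv riemannZeta (-2) = -riemannZeta 3 / (4 * (π : ℂ) ^ 2) := by
    have h := deriv_riemannZeta_neg_two_mul_nat one_ne_zero
    norm_num at h
    rw [h]
    ring
  refine ⟨hval, ?_⟩
  rw [hval]
  field_simp
  ring
end

section
/- For every real number z with |z| < 1, one has ∫₀¹ √t / √((1 − t²)(1 − z t)) dt = √2 · ( ∫₀¹ du / ((1 − u²/2) · √((1 − u²)(1 − (1+z)u²/2))) − ∫₀¹ du / √((1 − u²)(1 − (1+z)u²/2)) ). -/
/-!
The substitution `t = u² / (2 - u²)` (the composite of the involution `t ↦ (1 - t) / (1 + t)` of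
`[0, 1]` with `t = 1 - u²`) turns the left-hand integrand into
`2u² / ((2 - u²) √(1 - u²) √(2 - (1 + z) u²))`, which is `√2` times the difference of the two
right-hand integrands because `1 / (1 - u²/2) - 1 = u² / (2 - u²)`. The right-hand side may be
merged into one integral since both integrands are integrable: their only singularity is the
factor `1 / √(1 - u²) = arcsin'` at `u = 1`.
-/

open Real intervalIntegral MeasureTheory Set

theorem intervalIntegrable_one_div_sqrt_one_sub_sq_mul {w : ℝ → ℝ}
    (hw : ContinuousOn w (Icc (-1) 1)) (hw_pos : ∀ x ∈ Icc (-1 : ℝ) 1, 0 < w x) :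
    IntervalIntegrable (fun x => 1 / √((1 - x ^ 2) * w x)) volume (-1) 1 := by
  have hcont : ContinuousOn (fun x => 1 / √(w x)) (uIcc (-1) 1) := by
    rw [uIcc_of_le (by norm_num)]
    exact continuousOn_const.div hw.sqrt fun x hx => (sqrt_pos.2 (hw_pos x hx)).ne'
  refine (Polynomial.Chebyshev.intervalIntegrable_sqrt_one_sub_sq_inv.mul_continuousOn
    hcont).congr fun x hx => ?_
  have hx : x ∈ Icc (-1 : ℝ) 1 := Ioc_subset_Icc_self (by simpa using hx)
  simp only [sqrt_mul' _ (hw_pos x hx).le, sqrt_inv, one_div, mul_inv]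

theorem hasDerivAt_sq_div_two_sub_sq {u : ℝ} (hu : u ^ 2 ≠ 2) :
    HasDerivAt (fun u : ℝ => u ^ 2 / (2 - u ^ 2)) (4 * u / (2 - u ^ 2) ^ 2) u := by
  refine ((hasDerivAt_pow 2 u).div ((hasDerivAt_pow 2 u).const_sub 2)
    (sub_ne_zero.2 hu.symm)).congr_deriv ?_
  norm_num
  ring

theorem sqrt_div_sqrt_comp_mul_deriv {z u : ℝ} (hz : |z| < 1) (hu : u ∈ Ioo (0 : ℝ) 1) :
    let t := u ^ 2 / (2 - u ^ 2)
    √t / √((1 - t ^ 2) * (1 - z * t)) * (4 * u / (2 - u ^ 2) ^ 2) =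
      √2 * (1 / ((1 - u ^ 2 / 2) * √((1 - u ^ 2) * (1 - (1 + z) * u ^ 2 / 2))) -
        1 / √((1 - u ^ 2) * (1 - (1 + z) * u ^ 2 / 2))) := by
  intro t
  obtain ⟨hu0, hu1⟩ := hu
  obtain ⟨hz1, hz2⟩ := abs_lt.mp hz
  have hp : 0 < 2 - u ^ 2 := by nlinarith
  set p := √(2 - u ^ 2)
  set q := √(1 - u ^ 2)
  set r := √(2 - (1 + z) * u ^ 2)
  have hp2 : p ^ 2 = 2 - u ^ 2 := sq_sqrt hp.le
  have hq2 : q ^ 2 = 1 - u ^ 2 := sq_sqrt (by nlinarith)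
  have hr2 : r ^ 2 = 2 - (1 + z) * u ^ 2 := sq_sqrt (by nlinarith)
  have hs2 : √2 ^ 2 = 2 := sq_sqrt zero_le_two
  have hp0 : 0 < p := sqrt_pos.2 hp
  have hq0 : 0 < q := sqrt_pos.2 (by nlinarith)
  have hr0 : 0 < r := sqrt_pos.2 (by nlinarith)
  have ht : t = (u / p) ^ 2 := by rw [div_pow, hp2]
  have hlhs : (1 - t ^ 2) * (1 - z * t) = (2 * q * r / p ^ 3) ^ 2 := by
    simp only [t]
    field_simp
    rw [show p ^ 6 = (p ^ 2) ^ 3 by ring, hp2, hq2, hr2]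
    ring
  have hrhs : (1 - u ^ 2) * (1 - (1 + z) * u ^ 2 / 2) = (q * r / √2) ^ 2 := by
    rw [div_pow, mul_pow, hq2, hr2, hs2]
    ring
  rw [hlhs, hrhs, ht, sqrt_sq (by positivity), sqrt_sq (by positivity), sqrt_sq (by positivity)]
  field_simp
  rw [hp2, hs2]
  ring

/-- For `|z| < 1`, the substitution `t = 1 − u²` gives
`∫₀¹ √t/√((1−t²)(1−zt)) dt
  = √2 (∫₀¹ du/((1−u²/2)√((1−u²)(1−(1+z)u²/2))) − ∫₀¹ du/√((1−u²)(1−(1+z)u²/2)))`. -/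
theorem integral_substitution (z : ℝ) (hz : |z| < 1) :
    ∫ t in (0:ℝ)..1, Real.sqrt t / Real.sqrt ((1 - t ^ 2) * (1 - z * t)) =
      Real.sqrt 2 *
        ((∫ u in (0:ℝ)..1,
            1 / ((1 - u ^ 2 / 2) * Real.sqrt ((1 - u ^ 2) * (1 - (1 + z) * u ^ 2 / 2)))) -
         ∫ u in (0:ℝ)..1, 1 / Real.sqrt ((1 - u ^ 2) * (1 - (1 + z) * u ^ 2 / 2))) := by
  obtain ⟨hz1, hz2⟩ := abs_lt.mp hz
  have hsq : ∀ u ∈ uIcc (0 : ℝ) 1, u ^ 2 < 2 := fun u hu => by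
    rw [uIcc_of_le zero_le_one] at hu
    nlinarith [hu.1, hu.2]
  have hB : IntervalIntegrable (fun u => 1 / √((1 - u ^ 2) * (1 - (1 + z) * u ^ 2 / 2)))
      volume 0 1 := by
    refine (intervalIntegrable_one_div_sqrt_one_sub_sq_mul (by fun_prop) fun u hu => ?_).mono_set
      (by simp [uIcc_of_le, Icc_subset_Icc])
    have hu2 : u ^ 2 ≤ 1 := by nlinarith [hu.1, hu.2]
    nlinarith [mul_le_mul_of_nonneg_left hu2 (by linarith : (0:ℝ) ≤ 1 + z)]
  have hA : IntervalIntegrable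
      (fun u => 1 / ((1 - u ^ 2 / 2) * √((1 - u ^ 2) * (1 - (1 + z) * u ^ 2 / 2)))) volume 0 1 := by
    have hcont : ContinuousOn (fun u : ℝ => 1 / (1 - u ^ 2 / 2)) (uIcc 0 1) :=
      continuousOn_const.div (by fun_prop) fun u hu => by linarith [hsq u hu]
    simpa only [one_div_mul_one_div] using hB.continuousOn_mul hcont
  have hsubst := integral_comp_mul_deriv_of_deriv_nonneg (a := 0) (b := 1)
    (g := fun t => √t / √((1 - t ^ 2) * (1 - z * t)))
    (continuousOn_pow 2 |>.div (by fun_prop) fun u hu => by linarith [hsq u hu])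
    (fun u hu => hasDerivAt_sq_div_two_sub_sq (hsq u (Ioo_subset_Icc_self hu)).ne)
    (fun u hu => div_nonneg (by norm_num at hu; linarith [hu.1]) (sq_nonneg _))
  norm_num at hsubst
  rw [← hsubst, ← integral_sub hA hB, ← intervalIntegral.integral_const_mul]
  exact integral_congr_Ioo_of_le zero_le_one fun u hu => sqrt_div_sqrt_comp_mul_deriv hz hu
end

section
/- The identity ∫₀¹ du / ((1 − u²/2) · √((1 − u²)(1 − 3u²/4))) = (3/2) · ∫₀¹ du / √((1 − u²)(1 − 3u²/4)) holds. -/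
/-!
The map `u ↦ √((1 - u²) / (1 - m u²))`, which is `sn t ↦ sn (K - t)` in Jacobi's notation,
is an involution of `(0, 1)` preserving the measure `dμ = du / √((1 - u²)(1 - m u²))`.
When `m = 2c - c²`, the function `(1 - c u²)⁻¹` and its transform under the involution add up
to the constant `(2 - c) / (1 - c)`, so averaging the integral over the involution gives
`∫ (1 - c u²)⁻¹ dμ = (2 - c) / (2 (1 - c)) ∫ dμ`. The theorem is the case `c = 1/2`, `m = 3/4`.
-/

open Real intervalIntegral MeasureTheory Set

noncomputable def ellipticRadical (m u : ℝ) : ℝ := √((1 - u ^ 2) * (1 - m * u ^ 2))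

noncomputable def ellipticInvolution (m u : ℝ) : ℝ := √((1 - u ^ 2) / (1 - m * u ^ 2))

section

variable {c m u : ℝ}

lemma one_sub_mul_sq_pos (hm : m < 1) (hu : u ^ 2 ≤ 1) : 0 < 1 - m * u ^ 2 := by
  rcases le_total 0 m with h | h <;> nlinarith [sq_nonneg u]

lemma sq_lt_one_of_mem_Ioo (hu : u ∈ Ioo (0 : ℝ) 1) : u ^ 2 < 1 := by
  nlinarith [hu.1, hu.2]

lemma ellipticInvolution_sq (hm : m < 1) (hu : u ∈ Ioo (0 : ℝ) 1) :
    ellipticInvolution m u ^ 2 = (1 - u ^ 2) / (1 - m * u ^ 2) :=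
  sq_sqrt (div_nonneg (by linarith [sq_lt_one_of_mem_Ioo hu])
    (one_sub_mul_sq_pos hm (sq_lt_one_of_mem_Ioo hu).le).le)

lemma one_sub_ellipticInvolution_sq (hm : m < 1) (hu : u ∈ Ioo (0 : ℝ) 1) :
    1 - ellipticInvolution m u ^ 2 = (1 - m) * u ^ 2 / (1 - m * u ^ 2) := by
  rw [ellipticInvolution_sq hm hu,
    one_sub_div (one_sub_mul_sq_pos hm (sq_lt_one_of_mem_Ioo hu).le).ne']
  ring

lemma one_sub_mul_ellipticInvolution_sq (hm : m < 1) (hu : u ∈ Ioo (0 : ℝ) 1) :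
    1 - m * ellipticInvolution m u ^ 2 = (1 - m) / (1 - m * u ^ 2) := by
  rw [ellipticInvolution_sq hm hu, mul_div_assoc',
    one_sub_div (one_sub_mul_sq_pos hm (sq_lt_one_of_mem_Ioo hu).le).ne']
  ring

lemma ellipticInvolution_mem_Ioo (hm : m < 1) (hu : u ∈ Ioo (0 : ℝ) 1) :
    ellipticInvolution m u ∈ Ioo (0 : ℝ) 1 := by
  have hd := one_sub_mul_sq_pos hm (sq_lt_one_of_mem_Ioo hu).le
  have hsq : 0 < 1 - ellipticInvolution m u ^ 2 := by
    rw [one_sub_ellipticInvolution_sq hm hu]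
    exact div_pos (mul_pos (sub_pos.2 hm) (pow_pos hu.1 2)) hd
  have hpos : 0 < ellipticInvolution m u :=
    sqrt_pos.2 (div_pos (by linarith [sq_lt_one_of_mem_Ioo hu]) hd)
  exact ⟨hpos, by nlinarith⟩

lemma ellipticInvolution_ellipticInvolution (hm : m < 1) (hu : u ∈ Ioo (0 : ℝ) 1) :
    ellipticInvolution m (ellipticInvolution m u) = u := by
  rw [ellipticInvolution, one_sub_ellipticInvolution_sq hm hu,
    one_sub_mul_ellipticInvolution_sq hm hu,
    div_div_div_cancel_right₀ (one_sub_mul_sq_pos hm (sq_lt_one_of_mem_Ioo hu).le).ne',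
    mul_div_cancel_left₀ _ (sub_pos.2 hm).ne', sqrt_sq hu.1.le]

lemma injOn_ellipticInvolution (hm : m < 1) : InjOn (ellipticInvolution m) (Ioo 0 1) :=
  fun x hx y hy hxy => by
    rw [← ellipticInvolution_ellipticInvolution hm hx, hxy,
      ellipticInvolution_ellipticInvolution hm hy]

lemma image_ellipticInvolution (hm : m < 1) : ellipticInvolution m '' Ioo 0 1 = Ioo 0 1 :=
  (mapsTo_iff_image_subset.1 fun _ hu => ellipticInvolution_mem_Ioo hm hu).antisymm
    fun _ hu =>
      ⟨_, ellipticInvolution_mem_Ioo hm hu, ellipticInvolution_ellipticInvolution hm hu⟩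

lemma ellipticRadical_eq_mul (hm : m < 1) (hu : u ∈ Ioo (0 : ℝ) 1) :
    ellipticRadical m u = ellipticInvolution m u * (1 - m * u ^ 2) := by
  have hd := one_sub_mul_sq_pos hm (sq_lt_one_of_mem_Ioo hu).le
  rw [ellipticRadical, ← sqrt_sq (mul_nonneg (ellipticInvolution_mem_Ioo hm hu).1.le hd.le),
    mul_pow, ellipticInvolution_sq hm hu, div_mul_eq_mul_div, pow_two (1 - m * u ^ 2),
    ← mul_assoc, mul_div_cancel_right₀ _ hd.ne']

lemma ellipticRadical_ellipticInvolution (hm : m < 1) (hu : u ∈ Ioo (0 : ℝ) 1) :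
    ellipticRadical m (ellipticInvolution m u) = (1 - m) * u / (1 - m * u ^ 2) := by
  have hd := one_sub_mul_sq_pos hm (sq_lt_one_of_mem_Ioo hu).le
  rw [ellipticRadical, one_sub_ellipticInvolution_sq hm hu,
    one_sub_mul_ellipticInvolution_sq hm hu,
    ← sqrt_sq (div_nonneg (mul_nonneg (sub_pos.2 hm).le hu.1.le) hd.le)]
  congr 1
  ring

lemma hasDerivAt_ellipticInvolution (hm : m < 1) (hu : u ∈ Ioo (0 : ℝ) 1) :
    HasDerivAt (ellipticInvolution m)
      (-((1 - m) * u) / ((1 - m * u ^ 2) ^ 2 * ellipticInvolution m u)) u := by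
  have hu2 := sq_lt_one_of_mem_Ioo hu
  have hd := one_sub_mul_sq_pos hm hu2.le
  have hquot : HasDerivAt (fun u : ℝ => (1 - u ^ 2) / (1 - m * u ^ 2))
      (-(2 * (1 - m) * u) / (1 - m * u ^ 2) ^ 2) u := by
    refine (((hasDerivAt_pow 2 u).const_sub 1).div
      (((hasDerivAt_pow 2 u).const_mul m).const_sub 1) hd.ne').congr_deriv ?_
    push_cast
    ring
  refine (hquot.sqrt (div_pos (by linarith) hd).ne').congr_deriv ?_
  change _ / (2 * ellipticInvolution m u) = _
  have hE := (ellipticInvolution_mem_Ioo hm hu).1.ne'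
  field_simp

lemma abs_deriv_ellipticInvolution_mul_inv_ellipticRadical (hm : m < 1)
    (hu : u ∈ Ioo (0 : ℝ) 1) :
    |-((1 - m) * u) / ((1 - m * u ^ 2) ^ 2 * ellipticInvolution m u)| *
      (ellipticRadical m (ellipticInvolution m u))⁻¹ = (ellipticRadical m u)⁻¹ := by
  have hd := one_sub_mul_sq_pos hm (sq_lt_one_of_mem_Ioo hu).le
  have hE := (ellipticInvolution_mem_Ioo hm hu).1
  have h1m := sub_pos.2 hm
  have hu0 := hu.1
  rw [ellipticRadical_ellipticInvolution hm hu, ellipticRadical_eq_mul hm hu, abs_div, abs_neg,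
    abs_of_pos (by positivity), abs_of_pos (by positivity)]
  field_simp

lemma abs_deriv_ellipticInvolution_smul (hm : m < 1) (f : ℝ → ℝ) (hu : u ∈ Ioo (0 : ℝ) 1) :
    |-((1 - m) * u) / ((1 - m * u ^ 2) ^ 2 * ellipticInvolution m u)| •
      (f (ellipticInvolution m u) / ellipticRadical m (ellipticInvolution m u)) =
      f (ellipticInvolution m u) / ellipticRadical m u := by
  rw [smul_eq_mul, div_eq_mul_inv (f _), mul_left_comm,
    abs_deriv_ellipticInvolution_mul_inv_ellipticRadical hm hu, ← div_eq_mul_inv]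

theorem integrableOn_comp_ellipticInvolution_div_iff (hm : m < 1) (f : ℝ → ℝ) :
    IntegrableOn (fun u => f (ellipticInvolution m u) / ellipticRadical m u) (Ioo 0 1) ↔
      IntegrableOn (fun u => f u / ellipticRadical m u) (Ioo 0 1) := by
  rw [integrableOn_congr_fun (fun u hu => (abs_deriv_ellipticInvolution_smul hm f hu).symm)
    measurableSet_Ioo, ← integrableOn_image_iff_integrableOn_abs_deriv_smul measurableSet_Ioo
    (fun u hu => (hasDerivAt_ellipticInvolution hm hu).hasDerivWithinAt)
    (injOn_ellipticInvolution hm) fun v => f v / ellipticRadical m v,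
    image_ellipticInvolution hm]

theorem setIntegral_comp_ellipticInvolution_div (hm : m < 1) (f : ℝ → ℝ) :
    ∫ u in Ioo 0 1, f (ellipticInvolution m u) / ellipticRadical m u =
      ∫ u in Ioo 0 1, f u / ellipticRadical m u := by
  conv_rhs => rw [← image_ellipticInvolution hm]
  rw [integral_image_eq_integral_abs_deriv_smul measurableSet_Ioo
    (fun u hu => (hasDerivAt_ellipticInvolution hm hu).hasDerivWithinAt)
    (injOn_ellipticInvolution hm)]
  exact setIntegral_congr_fun measurableSet_Ioo
    fun u hu => (abs_deriv_ellipticInvolution_smul hm f hu).symm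

lemma ellipticRadical_eq_sqrt_mul_sqrt (hu : u ≤ 1) :
    ellipticRadical m u = √(1 - u) * √((1 + u) * (1 - m * u ^ 2)) := by
  rw [ellipticRadical, ← sqrt_mul (by linarith)]
  ring_nf

theorem integrableOn_div_ellipticRadical (hm : m < 1) {g : ℝ → ℝ}
    (hg : ContinuousOn g (Icc 0 1)) :
    IntegrableOn (fun u => g u / ellipticRadical m u) (Ioo 0 1) := by
  have hsing : IntegrableOn (fun u : ℝ => (1 - u) ^ (-(1 / 2) : ℝ)) (Ioo 0 1) := by
    have h := intervalIntegrable_rpow' (a := 0) (b := 1) (r := -(1 / 2)) (by norm_num)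
    simpa [intervalIntegrable_iff_integrableOn_Ioo_of_le] using (h.comp_sub_left 1).symm
  have hreg : ContinuousOn (fun u => g u / √((1 + u) * (1 - m * u ^ 2))) (Icc 0 1) := by
    refine hg.div (by fun_prop) fun u hu => (sqrt_pos.2 (mul_pos ?_ ?_)).ne'
    · linarith [hu.1]
    · exact one_sub_mul_sq_pos hm (by nlinarith [hu.1, hu.2])
  refine (hsing.mul_continuousOn_of_subset hreg measurableSet_Ioo isCompact_Icc
    Ioo_subset_Icc_self).congr_fun (fun u hu => ?_) measurableSet_Ioo
  dsimp only
  rw [ellipticRadical_eq_sqrt_mul_sqrt hu.2.le, rpow_neg (by linarith [hu.2]), ← sqrt_eq_rpow]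
  field_simp

lemma inv_one_sub_mul_sq_add_inv_one_sub_mul_ellipticInvolution_sq (hc : c < 1)
    (hm : m = 2 * c - c ^ 2) (hu : u ∈ Ioo (0 : ℝ) 1) :
    (1 - c * u ^ 2)⁻¹ + (1 - c * ellipticInvolution m u ^ 2)⁻¹ = (2 - c) / (1 - c) := by
  have hm1 : m < 1 := by nlinarith
  have hd := one_sub_mul_sq_pos hm1 (sq_lt_one_of_mem_Ioo hu).le
  have hdc := one_sub_mul_sq_pos hc (sq_lt_one_of_mem_Ioo hu).le
  have h1c := sub_pos.2 hc
  have hcE : 1 - c * ellipticInvolution m u ^ 2 =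
      (1 - c) * (1 - c * u ^ 2) / (1 - m * u ^ 2) := by
    rw [ellipticInvolution_sq hm1 hu, mul_div_assoc', one_sub_div hd.ne', hm]
    ring
  rw [hcE, inv_div]
  field_simp
  rw [hm]
  ring

theorem setIntegral_inv_one_sub_mul_sq_div_ellipticRadical (hc : c < 1)
    (hm : m = 2 * c - c ^ 2) :
    ∫ u in Ioo 0 1, (1 - c * u ^ 2)⁻¹ / ellipticRadical m u =
      (2 - c) / (2 * (1 - c)) * ∫ u in Ioo 0 1, 1 / ellipticRadical m u := by
  have hm1 : m < 1 := by nlinarith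
  set f : ℝ → ℝ := fun u => (1 - c * u ^ 2)⁻¹
  have hf : IntegrableOn (fun u => f u / ellipticRadical m u) (Ioo 0 1) :=
    integrableOn_div_ellipticRadical hm1 <| by
      refine ContinuousOn.inv₀ (by fun_prop) fun u hu => (one_sub_mul_sq_pos hc ?_).ne'
      nlinarith [hu.1, hu.2]
  have hfE := (integrableOn_comp_ellipticInvolution_div_iff hm1 f).2 hf
  have hsum : ∫ u in Ioo 0 1, (f u / ellipticRadical m u +
      f (ellipticInvolution m u) / ellipticRadical m u) =
      (2 - c) / (1 - c) * ∫ u in Ioo 0 1, 1 / ellipticRadical m u := by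
    rw [← MeasureTheory.integral_const_mul]
    refine setIntegral_congr_fun measurableSet_Ioo fun u hu => ?_
    rw [← add_div, inv_one_sub_mul_sq_add_inv_one_sub_mul_ellipticInvolution_sq hc hm hu,
      mul_one_div]
  rw [integral_add hf hfE, setIntegral_comp_ellipticInvolution_div hm1] at hsum
  rw [mul_comm 2, ← div_div, div_mul_eq_mul_div, ← hsum]
  ring

end

/-- The key elliptic-integral relation:
`∫₀¹ du/((1−u²/2)√((1−u²)(1−3u²/4))) = (3/2) ∫₀¹ du/√((1−u²)(1−3u²/4))`. -/
theorem elliptic_integral_relation :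
    ∫ u in (0:ℝ)..1,
        1 / ((1 - u ^ 2 / 2) * Real.sqrt ((1 - u ^ 2) * (1 - 3 * u ^ 2 / 4))) =
      (3 / 2) * ∫ u in (0:ℝ)..1, 1 / Real.sqrt ((1 - u ^ 2) * (1 - 3 * u ^ 2 / 4)) := by
  have hS : ∀ u : ℝ, √((1 - u ^ 2) * (1 - 3 * u ^ 2 / 4)) = ellipticRadical (3 / 4) u :=
    fun u => by rw [ellipticRadical]; ring_nf
  have key := setIntegral_inv_one_sub_mul_sq_div_ellipticRadical (c := 1 / 2) (m := 3 / 4)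
    (by norm_num) (by norm_num)
  rw [show (2 - 1 / 2 : ℝ) / (2 * (1 - 1 / 2)) = 3 / 2 by norm_num] at key
  simp only [integral_of_le zero_le_one, integral_Ioc_eq_integral_Ioo, hS]
  rw [← key]
  congr 1 with u
  rw [one_div, mul_inv, div_eq_mul_inv]
  ring
end

section
/- The identity ∫₀¹ √t / √((1 − t²)(1 − t/2)) dt = (√2 / 2) · ∫₀¹ du / √((1 − u²)(1 − 3u²/4)) du holds. -/
/-!
Both integrals are multiples of `∫₀¹ ds / √(s(1-s)(1+s)(2-s))`. On the left, the integrand is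
`√2 · t / √(t(1-t)(1+t)(2-t))`, and since the quartic is invariant under `t ↦ 1 - t` the weight
`t` may be replaced by its mean `1/2`. On the right, the substitution `s = 2(1-u²)/(2-u²)`, a
bijection of `(0,1)` with `ds = -4u/(2-u²)² du`, turns the quartic into
`(4u/(2-u²)²)² (1-u²)(1-3u²/4)`, hence `ds/√(s(1-s)(1+s)(2-s))` into `du/√((1-u²)(1-3u²/4))`.
-/

open Real intervalIntegral Set MeasureTheory

theorem intervalIntegral.integral_id_smul_of_symmetric {E : Type*} [NormedAddCommGroup E]
    [NormedSpace ℝ E] {f : ℝ → E} {a b : ℝ} (hf : IntervalIntegrable f volume a b)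
    (hsymm : ∀ x, f (a + b - x) = f x) :
    ∫ x in a..b, x • f x = ((a + b) / 2) • ∫ x in a..b, f x := by
  have hreflect : ∫ x in a..b, x • f x = ∫ x in a..b, (a + b - x) • f x := by
    simpa [hsymm] using (integral_comp_sub_left (a := a) (b := b) (fun x => x • f x) (a + b)).symm
  have hsplit : ∫ x in a..b, (a + b - x) • f x =
      (a + b) • (∫ x in a..b, f x) - ∫ x in a..b, x • f x := by
    simp only [sub_smul]
    rw [integral_sub (f := fun x => (a + b) • f x) (g := fun x => x • f x) (hf.smul (a + b))
      (hf.continuousOn_smul continuousOn_id), integral_smul]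
  have htwice : (2 : ℝ) • ∫ x in a..b, x • f x = (a + b) • ∫ x in a..b, f x := by
    rw [two_smul]
    exact eq_sub_iff_add_eq.mp (hreflect.trans hsplit)
  calc ∫ x in a..b, x • f x = (2 : ℝ)⁻¹ • (2 : ℝ) • ∫ x in a..b, x • f x := by
        rw [inv_smul_smul₀ two_ne_zero]
    _ = ((a + b) / 2) • ∫ x in a..b, f x := by rw [htwice, smul_smul, inv_mul_eq_div]

lemma integrableOn_one_div_sqrt_one_sub_sq_mul :
    IntegrableOn (fun u : ℝ => 1 / √((1 - u ^ 2) * (1 - 3 * u ^ 2 / 4))) (Ioo 0 1) := by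
  have hdom : IntegrableOn (fun u : ℝ => 2 * (1 - u) ^ (-(1 / 2) : ℝ)) (Ioo 0 1) := by
    have hrpow := intervalIntegrable_rpow' (a := 1) (b := 0) (r := -(1 / 2)) (by norm_num)
    have hreflected := hrpow.comp_sub_left 1
    simp only [sub_self, sub_zero] at hreflected
    exact ((intervalIntegrable_iff_integrableOn_Ioo_of_le zero_le_one).1 hreflected).const_mul 2
  refine hdom.mono' (Measurable.aestronglyMeasurable (by fun_prop))
    (ae_restrict_of_forall_mem measurableSet_Ioo fun u hu => ?_)
  obtain ⟨hu0, hu1⟩ := hu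
  have hbound : (1 - u) / 4 ≤ (1 - u ^ 2) * (1 - 3 * u ^ 2 / 4) := by
    nlinarith [mul_pos (sub_pos.2 hu1) hu0, mul_pos (mul_pos (sub_pos.2 hu1) hu0) hu0]
  rw [rpow_neg (sub_pos.2 hu1).le, ← sqrt_eq_rpow, norm_of_nonneg (by positivity)]
  calc 1 / √((1 - u ^ 2) * (1 - 3 * u ^ 2 / 4)) ≤ 1 / √((1 - u) / 4) :=
        one_div_le_one_div_of_le (sqrt_pos.2 (by linarith)) (sqrt_le_sqrt hbound)
    _ = 2 * (√(1 - u))⁻¹ := by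
        rw [sqrt_div' _ (by norm_num : (0:ℝ) ≤ 4), show (4 : ℝ) = 2 ^ 2 by norm_num,
          sqrt_sq zero_le_two]
        field_simp

noncomputable def invSqrtQuartic (s : ℝ) : ℝ := 1 / √(s * (1 - s) * (1 + s) * (2 - s))

lemma invSqrtQuartic_one_sub (s : ℝ) : invSqrtQuartic (1 - s) = invSqrtQuartic s := by
  rw [invSqrtQuartic, invSqrtQuartic]
  congr 2
  ring

lemma sqrt_div_sqrt_eq_invSqrtQuartic {t : ℝ} (ht : 0 ≤ t) :
    √t / √((1 - t ^ 2) * (1 - t / 2)) = √2 * (t * invSqrtQuartic t) := by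
  rcases ht.eq_or_lt with rfl | ht
  · simp
  have hquartic : t * (1 - t) * (1 + t) * (2 - t) = 2 * t * ((1 - t ^ 2) * (1 - t / 2)) := by
    ring
  have hsqrt : √2 * √t ≠ 0 := by positivity
  rw [invSqrtQuartic, hquartic, sqrt_mul (x := 2 * t) (by positivity), sqrt_mul zero_le_two]
  calc √t / √((1 - t ^ 2) * (1 - t / 2))
      = √2 * √t * √t / (√2 * √t * √((1 - t ^ 2) * (1 - t / 2))) :=
        (mul_div_mul_left _ _ hsqrt).symm
    _ = √2 * (t * (1 / (√2 * √t * √((1 - t ^ 2) * (1 - t / 2))))) := by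
        rw [mul_assoc √2, mul_self_sqrt ht.le]
        ring

noncomputable def quarticSubst (u : ℝ) : ℝ := 2 * (1 - u ^ 2) / (2 - u ^ 2)

lemma hasDerivAt_quarticSubst {u : ℝ} (hu : 2 - u ^ 2 ≠ 0) :
    HasDerivAt quarticSubst (-4 * u / (2 - u ^ 2) ^ 2) u := by
  have := ((((hasDerivAt_pow 2 u).const_sub 1).const_mul 2).div
    ((hasDerivAt_pow 2 u).const_sub 2) hu)
  refine this.congr_deriv ?_
  ring

lemma hasDerivWithinAt_quarticSubst {u : ℝ} (hu : u ∈ Ioo 0 1) :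
    HasDerivWithinAt quarticSubst (-4 * u / (2 - u ^ 2) ^ 2) (Ioo 0 1) u :=
  (hasDerivAt_quarticSubst (by nlinarith [hu.1, hu.2])).hasDerivWithinAt

lemma quarticSubst_mem_Ioo {u : ℝ} (hu : u ∈ Ioo 0 1) : quarticSubst u ∈ Ioo 0 1 := by
  obtain ⟨hu0, hu1⟩ := hu
  have hden : 0 < 2 - u ^ 2 := by nlinarith
  rw [quarticSubst, mem_Ioo, lt_div_iff₀ hden, div_lt_one hden]
  constructor <;> nlinarith

lemma quarticSubst_image_Ioo : quarticSubst '' Ioo 0 1 = Ioo 0 1 := by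
  refine (mapsTo_iff_image_subset.1 fun u => quarticSubst_mem_Ioo).antisymm ?_
  have hcont : ContinuousOn quarticSubst (Icc 0 1) := by
    refine ContinuousOn.div (by fun_prop) (by fun_prop) fun u hu => ?_
    nlinarith [hu.1, hu.2]
  simpa [quarticSubst] using intermediate_value_Ioo' zero_le_one hcont

lemma injOn_quarticSubst : InjOn quarticSubst (Ioo 0 1) := by
  intro u hu v hv h
  have hu2 : 2 - u ^ 2 ≠ 0 := by nlinarith [hu.1, hu.2]
  have hv2 : 2 - v ^ 2 ≠ 0 := by nlinarith [hv.1, hv.2]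
  rw [quarticSubst, quarticSubst, div_eq_div_iff hu2 hv2] at h
  exact (pow_left_inj₀ hu.1.le hv.1.le two_ne_zero).1 (by linarith)

lemma eqOn_abs_deriv_mul_invSqrtQuartic_quarticSubst :
    EqOn (fun u => |-4 * u / (2 - u ^ 2) ^ 2| * invSqrtQuartic (quarticSubst u))
      (fun u => 1 / √((1 - u ^ 2) * (1 - 3 * u ^ 2 / 4))) (Ioo 0 1) := by
  rintro u ⟨hu0, hu1⟩
  have hden : 0 < 2 - u ^ 2 := by nlinarith
  have hjac : 0 < 4 * u / (2 - u ^ 2) ^ 2 := by positivity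
  have hquartic : quarticSubst u * (1 - quarticSubst u) * (1 + quarticSubst u) *
      (2 - quarticSubst u) =
        (4 * u / (2 - u ^ 2) ^ 2) ^ 2 * ((1 - u ^ 2) * (1 - 3 * u ^ 2 / 4)) := by
    rw [quarticSubst]
    field_simp
    ring
  dsimp only
  rw [neg_mul, neg_div, abs_neg, abs_of_pos hjac, invSqrtQuartic, hquartic,
    sqrt_mul (sq_nonneg _), sqrt_sq hjac.le, mul_one_div, div_mul_cancel_left₀ hjac.ne', one_div]

lemma integrableOn_invSqrtQuartic : IntegrableOn invSqrtQuartic (Ioo 0 1) := by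
  rw [← quarticSubst_image_Ioo, integrableOn_image_iff_integrableOn_abs_deriv_smul
    measurableSet_Ioo (fun _ => hasDerivWithinAt_quarticSubst) injOn_quarticSubst]
  exact integrableOn_one_div_sqrt_one_sub_sq_mul.congr_fun
    eqOn_abs_deriv_mul_invSqrtQuartic_quarticSubst.symm measurableSet_Ioo

lemma setIntegral_invSqrtQuartic :
    ∫ s in Ioo 0 1, invSqrtQuartic s =
      ∫ u in Ioo 0 1, 1 / √((1 - u ^ 2) * (1 - 3 * u ^ 2 / 4)) := by
  conv_lhs => rw [← quarticSubst_image_Ioo]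
  rw [integral_image_eq_integral_abs_deriv_smul
    measurableSet_Ioo (fun _ => hasDerivWithinAt_quarticSubst) injOn_quarticSubst]
  exact setIntegral_congr_fun measurableSet_Ioo eqOn_abs_deriv_mul_invSqrtQuartic_quarticSubst

/-- `∫₀¹ √t/√((1−t²)(1−t/2)) dt = (√2/2) ∫₀¹ du/√((1−u²)(1−3u²/4))`. -/
theorem integral_z_half :
    ∫ t in (0:ℝ)..1, Real.sqrt t / Real.sqrt ((1 - t ^ 2) * (1 - t / 2)) =
      (Real.sqrt 2 / 2) * ∫ u in (0:ℝ)..1,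
        1 / Real.sqrt ((1 - u ^ 2) * (1 - 3 * u ^ 2 / 4)) := by
  have hint : IntervalIntegrable invSqrtQuartic volume 0 1 :=
    (intervalIntegrable_iff_integrableOn_Ioo_of_le zero_le_one).2 integrableOn_invSqrtQuartic
  have hmean := integral_id_smul_of_symmetric hint fun x => by
    simpa using invSqrtQuartic_one_sub x
  simp only [smul_eq_mul, zero_add] at hmean
  calc ∫ t in (0:ℝ)..1, √t / √((1 - t ^ 2) * (1 - t / 2))
      = ∫ t in (0:ℝ)..1, √2 * (t * invSqrtQuartic t) :=
        integral_congr fun t ht => sqrt_div_sqrt_eq_invSqrtQuartic (by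
          rw [uIcc_of_le zero_le_one] at ht; exact ht.1)
    _ = √2 / 2 * ∫ s in (0:ℝ)..1, invSqrtQuartic s := by
        rw [intervalIntegral.integral_const_mul, hmean]
        ring
    _ = √2 / 2 * ∫ u in (0:ℝ)..1, 1 / √((1 - u ^ 2) * (1 - 3 * u ^ 2 / 4)) := by
        rw [integral_of_le zero_le_one, integral_of_le zero_le_one, integral_Ioc_eq_integral_Ioo,
          integral_Ioc_eq_integral_Ioo, setIntegral_invSqrtQuartic]
end
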